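/- Let (A, Con, Δ) be a normal default structure with trivial entailment. The derived skeptical nonmonotonic consequence relation |~_A satisfies cautious cut: for finite consistent sets X, T, Y, if X |~_A T and X ∪ T |~_A Y, then X |~_A Y. -/

import Mathlib

/-- A set is consistent if every finite subset of it lies in Con. -/
def IsCons {α : Type*} (Con : Set α → Prop) (S : Set α) : Prop :=
  ∀ X : Set α, X ⊆ S → X.Finite → Con X

/-- With trivial entailment: φ(x, S, 0) = x and
φ(x, S, i+1) = φ(x, S, i) ∪ {a | (X, a) ∈ Δ, X ⊆ φ(x, S, i), {a} ∪ S consistent}. -/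
def phiT {α : Type*} (Con : Set α → Prop) (Δ : Set (Set α × α)) (x S : Set α) :
    ℕ → Set α
  | 0 => x
  | i + 1 =>
      phiT Con Δ x S i ∪
        {a | ∃ X : Set α, (X, a) ∈ Δ ∧ X ⊆ phiT Con Δ x S i ∧ IsCons Con ({a} ∪ S)}

/-- Φ(x, S) = ⋃_{i≥0} φ(x, S, i). -/
def PhiT {α : Type*} (Con : Set α → Prop) (Δ : Set (Set α × α)) (x S : Set α) : Set α :=
  ⋃ i, phiT Con Δ x S i

/-- A consistent set y is an extension of x (x ε y) if Φ(x, y) = y. -/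
def ExtT {α : Type*} (Con : Set α → Prop) (Δ : Set (Set α × α)) (x y : Set α) : Prop :=
  IsCons Con y ∧ PhiT Con Δ x y = y

/-- Skeptical nonmonotonic consequence: X |~ a iff a belongs to every extension of X. -/
def Nmc {α : Type*} (Con : Set α → Prop) (Δ : Set (Set α × α)) (X : Set α) (a : α) : Prop :=
  ∀ y : Set α, ExtT Con Δ X y → a ∈ y

/-- X |~ Y iff X |~ b for every b ∈ Y. -/
def NmcS {α : Type*} (Con : Set α → Prop) (Δ : Set (Set α × α)) (X Y : Set α) : Prop :=
  ∀ b ∈ Y, Nmc Con Δ X b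

/-! Since rule premises are finite, the extension condition Φ(x, y) = y says that y is the
least set containing x and closed under the rules whose conclusion is consistent with y.
Enlarging x inside y preserves this, so if every extension y of X contains T, each of them
is an extension of X ∪ T, and what holds in all extensions of X ∪ T holds in all of X. -/

section Extensions

variable {α : Type*} {Con : Set α → Prop} {Δ : Set (Set α × α)}

lemma phiT_monotone (x S : Set α) : Monotone (phiT Con Δ x S) :=
  monotone_nat_of_le_succ fun _ => Set.subset_union_left

lemma phiT_mono_left {x x' : Set α} (S : Set α) (h : x ⊆ x') (i : ℕ) :
    phiT Con Δ x S i ⊆ phiT Con Δ x' S i := by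
  induction i with
  | zero => exact h
  | succ i ih =>
    rintro a (ha | ⟨W, hW, hWsub, hcons⟩)
    · exact Or.inl (ih ha)
    · exact Or.inr ⟨W, hW, hWsub.trans ih, hcons⟩

lemma PhiT_mono_left {x x' : Set α} (S : Set α) (h : x ⊆ x') :
    PhiT Con Δ x S ⊆ PhiT Con Δ x' S :=
  Set.iUnion_mono (phiT_mono_left S h)

lemma subset_PhiT (x S : Set α) : x ⊆ PhiT Con Δ x S :=
  Set.subset_iUnion (phiT Con Δ x S) 0

-- Finiteness of W is what puts all premises into a single stage φ(x, S, j).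
lemma mem_PhiT_of_rule {x S W : Set α} {a : α} (hW : (W, a) ∈ Δ) (hWfin : W.Finite)
    (hWsub : W ⊆ PhiT Con Δ x S) (hcons : IsCons Con ({a} ∪ S)) : a ∈ PhiT Con Δ x S := by
  have hWsub' : (hWfin.toFinset : Set α) ⊆ ⋃ i, phiT Con Δ x S i := by simpa [PhiT] using hWsub
  obtain ⟨j, hj⟩ :=
    (phiT_monotone x S).directed_le.exists_mem_subset_of_finset_subset_biUnion hWsub'
  exact Set.mem_iUnion.mpr ⟨j + 1, Or.inr ⟨W, hW, by simpa using hj, hcons⟩⟩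

lemma PhiT_subset_of_closed {x S z : Set α} (hxz : x ⊆ z)
    (hz : ∀ W a, (W, a) ∈ Δ → W ⊆ z → IsCons Con ({a} ∪ S) → a ∈ z) :
    PhiT Con Δ x S ⊆ z := by
  refine Set.iUnion_subset fun i => ?_
  induction i with
  | zero => exact hxz
  | succ i ih =>
    rintro a (ha | ⟨W, hW, hWsub, hcons⟩)
    · exact ih ha
    · exact hz W a hW (hWsub.trans ih) hcons

lemma ExtT.of_subset_of_subset (hfin : ∀ p ∈ Δ, p.1.Finite) {x x' y : Set α}
    (hy : ExtT Con Δ x y) (hxx' : x ⊆ x') (hx'y : x' ⊆ y) : ExtT Con Δ x' y := by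
  obtain ⟨hcons, hPhi⟩ := hy
  refine ⟨hcons, le_antisymm ?_ ?_⟩
  · refine PhiT_subset_of_closed hx'y fun W a hW hWy hconsa => ?_
    rw [← hPhi] at hWy ⊢
    exact mem_PhiT_of_rule hW (hfin _ hW) hWy hconsa
  · calc y = PhiT Con Δ x y := hPhi.symm
      _ ⊆ PhiT Con Δ x' y := PhiT_mono_left y hxx'

lemma NmcS.cut (hfin : ∀ p ∈ Δ, p.1.Finite) {X T Y : Set α} (hT : NmcS Con Δ X T)
    (hY : NmcS Con Δ (X ∪ T) Y) : NmcS Con Δ X Y := fun b hb y hy =>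
  hY b hb y <| hy.of_subset_of_subset hfin Set.subset_union_left <|
    Set.union_subset (hy.2 ▸ subset_PhiT X y) fun t ht => hT t ht y hy

end Extensions

theorem skeptical_cautious_cut_general {α : Type*} (Con : Set α → Prop) (Δ : Set (Set α × α))
    -- Con is a collection of finite subsets of A with ∅ ∈ Con, closed under
    -- subsets, containing every singleton
    (hCfin : ∀ X : Set α, Con X → X.Finite)
    -- Δ is a set of normal default rules, each a pair (X, a) with X ∈ Con
    (hDelta : ∀ p ∈ Δ, Con p.1) :
    ∀ X T Y : Set α, Con X → Con T → Con Y →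
      NmcS Con Δ X T → NmcS Con Δ (X ∪ T) Y → NmcS Con Δ X Y := by
  intro X T Y _ _ _ hT hY
  exact hT.cut (fun p hp => hCfin p.1 (hDelta p hp)) hY

/-- the skeptical nonmonotonic consequence relation satisfies cautious cut:
if X |~ T and X ∪ T |~ Y, then X |~ Y. -/
theorem skeptical_cautious_cut {α : Type*} (Con : Set α → Prop) (Δ : Set (Set α × α))
    -- Con is a collection of finite subsets of A with ∅ ∈ Con, closed under
    -- subsets, containing every singleton
    (hCfin : ∀ X : Set α, Con X → X.Finite)
    (hCempty : Con ∅)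
    (hCsub : ∀ X Y : Set α, X ⊆ Y → Con Y → Con X)
    (hCsing : ∀ a : α, Con {a})
    -- Δ is a set of normal default rules, each a pair (X, a) with X ∈ Con
    (hDelta : ∀ p ∈ Δ, Con p.1) :
    ∀ X T Y : Set α, Con X → Con T → Con Y →
      NmcS Con Δ X T → NmcS Con Δ (X ∪ T) Y → NmcS Con Δ X Y :=
  skeptical_cautious_cut_general Con Δ hCfin hDelta
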